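/- arXiv:1808.01460 — 7 statements merged into one kernel-verified Lean document; each statement's English description precedes it below -/
import Mathlib

section
/- Let A be a unital C*-algebra and let a, b be elements of the closed unit ball of A with a positive (i.e. 0 ≤ a and ‖a‖ ≤ 1, ‖b‖ ≤ 1). Then ‖1 − a(1 + b)a‖ ≤ 1. -/
/-- In a unital C*-algebra `A`, if `a, b` are in the closed unit ball
with `a` positive, then `‖1 - a(1 + b)a‖ ≤ 1`. -/
theorem norm_one_sub_mul_le_one
    {A : Type*} [NormedRing A] [StarRing A] [CStarRing A] [CompleteSpace A]
    [NormedAlgebra ℂ A] [StarModule ℂ A] [PartialOrder A] [StarOrderedRing A]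
    (a b : A) (ha : 0 ≤ a) (hna : ‖a‖ ≤ 1) (hnb : ‖b‖ ≤ 1) :
    ‖1 - a * (1 + b) * a‖ ≤ 1 := by
  letI : CStarAlgebra A := { }
  have ha' : IsSelfAdjoint a := IsSelfAdjoint.of_nonneg ha
  set s : A := 1 + b with hs
  set z : A := 1 - a * s * a with hz
  -- a * a ≤ 1
  have haa0 : (0 : A) ≤ a * a := by
    simpa [ha'.star_eq] using star_mul_self_nonneg a
  have haa1 : a * a ≤ 1 := by
    refine (CStarAlgebra.norm_le_one_iff_of_nonneg (a * a) haa0).mp ?_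
    calc ‖a * a‖ ≤ ‖a‖ * ‖a‖ := norm_mul_le a a
      _ ≤ 1 := by nlinarith [norm_nonneg a]
  -- star b * b ≤ 1
  have hbb0 : (0 : A) ≤ star b * b := star_mul_self_nonneg b
  have hbb1 : star b * b ≤ 1 := by
    refine (CStarAlgebra.norm_le_one_iff_of_nonneg (star b * b) hbb0).mp ?_
    calc ‖star b * b‖ ≤ ‖star b‖ * ‖b‖ := norm_mul_le _ _
      _ ≤ 1 := by rw [norm_star]; nlinarith [norm_nonneg b]
  have hd : (0 : A) ≤ star s * s - star s * (a * a) * s := by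
    have := star_left_conjugate_le_conjugate haa1 s
    rw [mul_one] at this
    exact sub_nonneg.mpr this
  have he : (0 : A) ≤ 1 - star b * b := sub_nonneg.mpr hbb1
  -- key identity
  have key : 1 - star z * z
      = a * ((star s * s - star s * (a * a) * s) + (1 - star b * b)) * a := by
    rw [hz, hs]
    simp only [star_sub, star_mul, star_one, star_add, ha'.star_eq]
    noncomm_ring
  have hzz1 : star z * z ≤ 1 := by
    have h0 : (0 : A) ≤ a * ((star s * s - star s * (a * a) * s) + (1 - star b * b)) * a := by
      have := star_left_conjugate_nonneg (add_nonneg hd he) a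
      rwa [ha'.star_eq] at this
    rw [← key] at h0
    exact sub_nonneg.mp h0
  have hzz0 : (0 : A) ≤ star z * z := star_mul_self_nonneg z
  have hnorm : ‖star z * z‖ ≤ 1 :=
    (CStarAlgebra.norm_le_one_iff_of_nonneg (star z * z) hzz0).mpr hzz1
  rw [CStarRing.norm_star_mul_self] at hnorm
  have hz0 := norm_nonneg z
  nlinarith [hz0]
end

section
/- Let A be a unital C*-algebra and let a, b be elements of the closed unit ball of A with a positive. Set z = 1 − a(1 + b)a. Then z z* ≤ 1 − a² + a b b* a, and consequently z z* ≤ 1 (in the order of self-adjoint elements of A given by positivity of the difference). -/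
/-!
With `z = 1 - a(1 + b)a` and `a` self-adjoint, a direct expansion gives
`1 - a² + a b b* a - z z* = c* (1 - a²) c` for `c = (1 + b*) a`, which is positive because
`a² ≤ 1`. Finally `a b b* a ≤ a²` since `b b* ≤ 1`.
-/

theorem one_sub_mul_one_add_mul_mul_add_mul_one_sub_sq {R : Type*} [Ring R] (a b c : R) :
    (1 - a * (1 + b) * a) * (1 - a * (1 + c) * a) + a * (1 + b) * (1 - a ^ 2) * ((1 + c) * a) =
      1 - a ^ 2 + a * b * c * a := by
  noncomm_ring

section StarOrderedRing

variable {R : Type*} [Ring R] [StarRing R] [PartialOrder R] [StarOrderedRing R] {a : R}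

theorem IsSelfAdjoint.one_sub_mul_mul_star_le (ha : IsSelfAdjoint a) (ha_sq : a ^ 2 ≤ 1) (b : R) :
    (1 - a * (1 + b) * a) * star (1 - a * (1 + b) * a) ≤ 1 - a ^ 2 + a * b * star b * a := by
  have hstar : star (1 - a * (1 + b) * a) = 1 - a * (1 + star b) * a := by
    simp only [star_sub, star_one, star_mul, star_add, ha.star_eq, mul_assoc]
  have hconj : 0 ≤ a * (1 + b) * (1 - a ^ 2) * ((1 + star b) * a) := by
    simpa only [star_mul, star_add, star_one, star_star, ha.star_eq] using
      star_left_conjugate_nonneg (sub_nonneg.2 ha_sq) ((1 + star b) * a)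
  rw [hstar, ← one_sub_mul_one_add_mul_mul_add_mul_one_sub_sq]
  exact le_add_of_nonneg_right hconj

theorem IsSelfAdjoint.one_sub_sq_add_conjugate_le_one (ha : IsSelfAdjoint a) {x : R}
    (hx : x ≤ 1) : 1 - a ^ 2 + a * x * a ≤ 1 := by
  have hconj : a * x * a ≤ a ^ 2 := by
    simpa only [mul_one, sq] using ha.conjugate_le_conjugate hx
  rwa [sub_add_eq_add_sub, sub_le_iff_le_add, add_le_add_iff_left]

end StarOrderedRing

section CStarAlgebra

variable {A : Type*} [CStarAlgebra A] [PartialOrder A] [StarOrderedRing A]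

theorem CStarAlgebra.mul_star_le_one_of_norm_le_one {b : A} (hb : ‖b‖ ≤ 1) : b * star b ≤ 1 := by
  rw [← CStarAlgebra.norm_le_one_iff_of_nonneg _ (mul_star_self_nonneg b),
    CStarRing.norm_self_mul_star]
  exact mul_le_one₀ hb (norm_nonneg b) hb

theorem IsSelfAdjoint.sq_le_one_of_norm_le_one {a : A} (ha : IsSelfAdjoint a) (hna : ‖a‖ ≤ 1) :
    a ^ 2 ≤ 1 := by
  simpa only [sq, ha.star_eq] using CStarAlgebra.mul_star_le_one_of_norm_le_one hna

end CStarAlgebra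

/-- In a unital C*-algebra `A`, if `a, b` are in the closed unit ball
with `a` positive and `z = 1 - a(1 + b)a`, then `z z* ≤ 1 - a² + a b b* a` and
consequently `z z* ≤ 1`. -/
theorem mul_star_le_of_pos_unitBall
    {A : Type*} [NormedRing A] [StarRing A] [CStarRing A] [CompleteSpace A]
    [NormedAlgebra ℂ A] [StarModule ℂ A] [PartialOrder A] [StarOrderedRing A]
    (a b : A) (ha : 0 ≤ a) (hna : ‖a‖ ≤ 1) (hnb : ‖b‖ ≤ 1) :
    (1 - a * (1 + b) * a) * star (1 - a * (1 + b) * a) ≤ 1 - a ^ 2 + a * b * star b * a ∧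
      (1 - a * (1 + b) * a) * star (1 - a * (1 + b) * a) ≤ 1 := by
  let _ : CStarAlgebra A := {}
  have ha_sa : IsSelfAdjoint a := .of_nonneg ha
  have key := ha_sa.one_sub_mul_mul_star_le (ha_sa.sq_le_one_of_norm_le_one hna) b
  refine ⟨key, key.trans ?_⟩
  simpa only [mul_assoc] using
    ha_sa.one_sub_sq_add_conjugate_le_one (CStarAlgebra.mul_star_le_one_of_norm_le_one hnb)
end

section
/- Let A be a unital C*-algebra and let a, b be elements of the closed unit ball of A with a positive. Then ‖2a − a² + (1 − a) b (1 − a)‖ ≤ 1. (This is the C*-algebra instance of the Bergman operator inequality ‖2a − a^[2] + P₀(a)(b)‖ ≤ 1 for JB*-triples, since for positive a in a C*-algebra a^[2] = a² and P₀(a)(b) = (1 − a) b (1 − a).) -/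
/-!
Put `c = 1 - a` and `z = 1 - b`; the element is then `T = 1 - c z c`, and
`T⋆T = 1 - c (z + z⋆) c + c z⋆ c² z c`. Since `0 ≤ a ≤ 1`, `c` is self-adjoint with `c² ≤ 1`,
and `‖b‖ ≤ 1` gives `z⋆z = z + z⋆ - (1 - b⋆b) ≤ z + z⋆`. Hence the last term of `T⋆T` is
dominated by the middle one, so `T⋆T ≤ 1`, which in a C⋆-algebra means `‖T‖ ≤ 1`.
-/

section StarOrderedRing

variable {R : Type*} [Ring R] [StarRing R] [PartialOrder R] [StarOrderedRing R]

lemma star_one_sub_mul_one_sub_le {b : R} (hb : star b * b ≤ 1) :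
    star (1 - b) * (1 - b) ≤ (1 - b) + star (1 - b) := by
  have h : star (1 - b) * (1 - b) = (1 - b) + star (1 - b) - (1 - star b * b) := by
    rw [star_sub, star_one]
    noncomm_ring
  rw [h]
  exact sub_le_self _ (sub_nonneg.mpr hb)

lemma star_one_sub_conj_mul_one_sub_conj_le_one {c z : R} (hc : IsSelfAdjoint c)
    (hc1 : c * c ≤ 1) (hz : star z * z ≤ z + star z) :
    star (1 - c * z * c) * (1 - c * z * c) ≤ 1 := by
  have hexpand : star (1 - c * z * c) * (1 - c * z * c) =
      1 - c * (z + star z) * c + c * (star z * (c * c) * z) * c := by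
    rw [star_sub, star_one, star_mul, star_mul, hc.star_eq]
    noncomm_ring
  have hdom : c * (star z * (c * c) * z) * c ≤ c * (z + star z) * c := by
    refine hc.conjugate_le_conjugate (le_trans ?_ hz)
    simpa using star_left_conjugate_le_conjugate hc1 z
  calc star (1 - c * z * c) * (1 - c * z * c)
      ≤ 1 - c * (z + star z) * c + c * (z + star z) * c := by
        rw [hexpand]
        exact add_le_add_right hdom _
    _ = 1 := sub_add_cancel 1 _

end StarOrderedRing

section CStarAlgebra

variable {A : Type*} [CStarAlgebra A] [PartialOrder A] [StarOrderedRing A]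

lemma CStarAlgebra.norm_le_one_iff_star_mul_self_le_one (x : A) :
    ‖x‖ ≤ 1 ↔ star x * x ≤ 1 := by
  rw [← norm_le_one_iff_of_nonneg _ (star_mul_self_nonneg x), CStarRing.norm_star_mul_self,
    ← sq, sq_le_one_iff₀ (norm_nonneg x)]

lemma IsSelfAdjoint.mul_self_le_one {x : A} (hx : IsSelfAdjoint x) (hx1 : ‖x‖ ≤ 1) :
    x * x ≤ 1 := by
  simpa [hx.star_eq] using (CStarAlgebra.norm_le_one_iff_star_mul_self_le_one x).mp hx1

lemma CStarAlgebra.norm_one_sub_le_one {a : A} (ha : 0 ≤ a) (ha1 : ‖a‖ ≤ 1) : ‖1 - a‖ ≤ 1 := by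
  rw [norm_le_one_iff_of_nonneg _ (sub_nonneg.mpr ((norm_le_one_iff_of_nonneg a ha).mp ha1))]
  exact sub_le_self 1 ha

end CStarAlgebra

/-- In a unital C*-algebra `A`, if `a, b` are in the closed unit ball
with `a` positive, then `‖2a - a² + (1 - a) b (1 - a)‖ ≤ 1`. -/
theorem norm_bergman_operator_le_one
    {A : Type*} [NormedRing A] [StarRing A] [CStarRing A] [CompleteSpace A]
    [NormedAlgebra ℂ A] [StarModule ℂ A] [PartialOrder A] [StarOrderedRing A]
    (a b : A) (ha : 0 ≤ a) (hna : ‖a‖ ≤ 1) (hnb : ‖b‖ ≤ 1) :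
    ‖2 • a - a ^ 2 + (1 - a) * b * (1 - a)‖ ≤ 1 := by
  let : CStarAlgebra A := { }
  have hc : IsSelfAdjoint (1 - a) := (IsSelfAdjoint.one A).sub (.of_nonneg ha)
  have hc1 : (1 - a) * (1 - a) ≤ 1 :=
    hc.mul_self_le_one (CStarAlgebra.norm_one_sub_le_one ha hna)
  have hz : star (1 - b) * (1 - b) ≤ (1 - b) + star (1 - b) :=
    star_one_sub_mul_one_sub_le ((CStarAlgebra.norm_le_one_iff_star_mul_self_le_one b).mp hnb)
  have hT : 2 • a - a ^ 2 + (1 - a) * b * (1 - a) = 1 - (1 - a) * (1 - b) * (1 - a) := by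
    noncomm_ring
  rw [hT, CStarAlgebra.norm_le_one_iff_star_mul_self_le_one]
  exact star_one_sub_conj_mul_one_sub_conj_le_one hc hc1 hz
end

section
/- Let A be a unital C*-algebra, let e ∈ A be a partial isometry (i.e. e e* e = e), and let x be an element of the closed unit ball of A. Then ‖e e* x (1 − e* e) + (1 − e e*) x e* e‖ ≤ 4 · √(‖e − e e* x e* e‖). (This is the C*-algebra instance of the quantitative Peirce inequality ‖P₁(e)(x)‖ ≤ 4√(‖e − P₂(e)(x)‖) for tripotents in JB*-triples, since in a C*-algebra P₂(e)(x) = e e* x e* e and P₁(e)(x) = e e* x (1 − e* e) + (1 − e e*) x e* e.) -/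
/-! With `p = e e*`, `q = e* e` and `t = e - p x q`, the component `a = p x (1 - q)` satisfies
`a a* = (p x)(p x)* - (p x q)(p x q)* ≤ p - (e - t)(e - t)* ≤ e t* + t e*`, because
`x x* ≤ 1` and `p = e e*`; hence `‖a‖² ≤ 2‖t‖`. The other component `(1 - p) x q` is the
adjoint of the first one for the partial isometry `e*` and the contraction `x*`, with the
same `‖t‖`. -/

def IsPartialIsometry {R : Type*} [Mul R] [Star R] (e : R) : Prop := e * star e * e = e

namespace IsPartialIsometry

section Algebraic

variable {R : Type*} [Semigroup R] [StarMul R] {e : R}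

protected lemma star (he : IsPartialIsometry e) : IsPartialIsometry (star e) := by
  simpa [IsPartialIsometry, star_mul, mul_assoc] using congrArg star he

lemma isStarProjection_mul_star (he : IsPartialIsometry e) : IsStarProjection (e * star e) where
  isIdempotentElem := by rw [IsIdempotentElem, ← mul_assoc, he]
  isSelfAdjoint := .mul_star_self e

lemma isStarProjection_star_mul (he : IsPartialIsometry e) : IsStarProjection (star e * e) := by
  simpa using he.star.isStarProjection_mul_star

end Algebraic

lemma norm_le_one {E : Type*} [NonUnitalNormedRing E] [StarRing E] [CStarRing E] {e : E}
    (he : IsPartialIsometry e) : ‖e‖ ≤ 1 := by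
  have h := he.isStarProjection_star_mul.norm_le
  rw [CStarRing.norm_star_mul_self] at h
  nlinarith [norm_nonneg e]

end IsPartialIsometry

lemma IsStarProjection.mul_star_self_eq_add {R : Type*} [Ring R] [StarRing R] {q : R}
    (hq : IsStarProjection q) (y : R) :
    y * star y = y * q * star (y * q) + y * (1 - q) * star (y * (1 - q)) := by
  have h₁ := hq.isIdempotentElem.eq
  have h₂ := hq.one_sub.isIdempotentElem.eq
  simp only [star_mul, hq.isSelfAdjoint.star_eq, hq.one_sub.isSelfAdjoint.star_eq]
  rw [mul_assoc y q, ← mul_assoc q, h₁, mul_assoc y (1 - q), ← mul_assoc (1 - q), h₂]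
  noncomm_ring

section CStarAlgebra

variable {A : Type*} [CStarAlgebra A] [PartialOrder A] [StarOrderedRing A]

lemma IsStarProjection.mul_mul_star_le {p : A} (hp : IsStarProjection p) {x : A} (hx : ‖x‖ ≤ 1) :
    p * x * star (p * x) ≤ p := by
  have hxx : x * star x ≤ 1 := by
    rw [← CStarAlgebra.norm_le_one_iff_of_nonneg _ (mul_star_self_nonneg x),
      CStarRing.norm_self_mul_star]
    nlinarith [norm_nonneg x]
  have h := star_right_conjugate_le_conjugate hxx p
  rw [hp.isSelfAdjoint.star_eq, mul_one, hp.isIdempotentElem.eq] at h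
  rw [star_mul, hp.isSelfAdjoint.star_eq]
  simpa only [mul_assoc] using h

namespace IsPartialIsometry

variable {e : A}

lemma norm_sq_mul_mul_one_sub_le (he : IsPartialIsometry e) {x : A} (hx : ‖x‖ ≤ 1) :
    ‖e * star e * x * (1 - star e * e)‖ ^ 2 ≤ 2 * ‖e - e * star e * x * (star e * e)‖ := by
  set a := e * star e * x * (1 - star e * e)
  set t := e - e * star e * x * (star e * e)
  have hle : a * star a ≤ e * star t + t * star e :=
    calc a * star a
        = e * star e * x * star (e * star e * x)
          - e * star e * x * (star e * e) * star (e * star e * x * (star e * e)) :=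
          eq_sub_of_add_eq' (he.isStarProjection_star_mul.mul_star_self_eq_add _).symm
      _ ≤ e * star e - (e - t) * star (e - t) := by
          rw [sub_sub_cancel]
          exact sub_le_sub_right (he.isStarProjection_mul_star.mul_mul_star_le hx) _
      _ = e * star t + t * star e - t * star t := by
          rw [star_sub]
          noncomm_ring
      _ ≤ e * star t + t * star e := sub_le_self _ (mul_star_self_nonneg t)
  have he_norm := he.norm_le_one
  calc ‖a‖ ^ 2 = ‖a * star a‖ := by rw [CStarRing.norm_self_mul_star, sq]
    _ ≤ ‖e * star t + t * star e‖ :=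
        CStarAlgebra.norm_le_norm_of_nonneg_of_le (mul_star_self_nonneg a) hle
    _ ≤ ‖e‖ * ‖t‖ + ‖t‖ * ‖e‖ := by
        grw [norm_add_le, norm_mul_le, norm_mul_le, norm_star, norm_star]
    _ ≤ 2 * ‖t‖ := by nlinarith [norm_nonneg t]

lemma norm_sq_one_sub_mul_mul_le (he : IsPartialIsometry e) {x : A} (hx : ‖x‖ ≤ 1) :
    ‖(1 - e * star e) * x * (star e * e)‖ ^ 2 ≤ 2 * ‖e - e * star e * x * (star e * e)‖ := by
  have h := he.star.norm_sq_mul_mul_one_sub_le (x := star x) (by rwa [norm_star])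
  rw [← norm_star ((1 - e * star e) * x * (star e * e)), ← norm_star (e - _)]
  simpa [star_mul, mul_assoc] using h

end IsPartialIsometry

end CStarAlgebra

/-- quantitative Peirce inequality in a unital C*-algebra:
if `e` is a partial isometry and `‖x‖ ≤ 1`, then
`‖e e* x (1 - e* e) + (1 - e e*) x e* e‖ ≤ 4 √(‖e - e e* x e* e‖)`. -/
theorem norm_peirce_one_le
    {A : Type*} [NormedRing A] [StarRing A] [CStarRing A] [CompleteSpace A]
    [NormedAlgebra ℂ A] [StarModule ℂ A]
    (e : A) (he : e * star e * e = e) (x : A) (hx : ‖x‖ ≤ 1) :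
    ‖e * star e * x * (1 - star e * e) + (1 - e * star e) * x * (star e * e)‖ ≤
      4 * Real.sqrt ‖e - e * star e * x * (star e * e)‖ := by
  let : CStarAlgebra A := { }
  let := CStarAlgebra.spectralOrder A
  let := CStarAlgebra.spectralOrderedRing A
  set δ := ‖e - e * star e * x * (star e * e)‖
  have le_two_mul_sqrt : ∀ r : ℝ, 0 ≤ r → r ^ 2 ≤ 2 * δ → r ≤ 2 * √δ := fun r hr h => by
    nlinarith [Real.sq_sqrt (norm_nonneg _ : 0 ≤ δ), Real.sqrt_nonneg δ]
  have ha := le_two_mul_sqrt _ (norm_nonneg _) (IsPartialIsometry.norm_sq_mul_mul_one_sub_le he hx)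
  have hb := le_two_mul_sqrt _ (norm_nonneg _) (IsPartialIsometry.norm_sq_one_sub_mul_mul_le he hx)
  exact (norm_add_le _ _).trans (by linarith)
end

section
/- Let X be a real Banach space such that the closed convex hull of the set of extreme points of the closed unit ball of X has non-empty interior in X. Then every convex body K ⊆ X satisfies the strong Mankiewicz property: for every normed space Y, every convex subset L ⊆ Y, and every surjective isometry Δ : K → L, the map Δ is affine, i.e. Δ(t x + (1 − t) y) = t Δ(x) + (1 − t) Δ(y) for all x, y ∈ K and all t ∈ [0, 1]. -/
/-!
If `e` is an extreme point of the unit ball, metric midpoints in direction `e` are unique: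
`‖w - (x ± r e)‖ ≤ |r|` forces `w = x`. As `Δ '' K` is convex, a preimage of the midpoint of
`Δ p` and `Δ q` is a metric midpoint of `p` and `q`, so `Δ` maps midpoints of segments parallel
to extreme points to midpoints. A four-point argument carries this from a direction `u` to
`u + r e`, hence to all combinations of extreme points and, by continuity, to the closed convex
hull of the extreme points; as that hull is symmetric, it is a neighbourhood of `0`, so `Δ`
preserves midpoints of every short segment deep inside `K`. Along a segment between interior
points this local Jensen equation doubles up to the global one, which for a continuous map
forces affinity; `interior K` is dense in `K`.
-/

open Set Metric AffineMap

theorem continuousOn_of_norm_sub_eq {X Y : Type*} [SeminormedAddCommGroup X]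
    [SeminormedAddCommGroup Y] {K : Set X} {Δ : X → Y}
    (hiso : ∀ x ∈ K, ∀ y ∈ K, ‖Δ x - Δ y‖ = ‖x - y‖) : ContinuousOn Δ K :=
  (LipschitzOnWith.of_dist_le_mul (K := 1) fun x hx y hy => by
    simp [dist_eq_norm, hiso x hx y hy]).continuousOn

theorem Icc_subset_of_isClosed_of_add_div_two_mem {Z : Set ℝ} (hZ : IsClosed Z)
    (hmid : ∀ t ∈ Z, ∀ s ∈ Z, (t + s) / 2 ∈ Z) {a b : ℝ} (ha : a ∈ Z) (hb : b ∈ Z) :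
    Icc a b ⊆ Z := by
  intro t ⟨hat, htb⟩
  by_contra ht
  -- `(p, q)` is the gap of `Z` around `t`; its midpoint would lie in the gap
  obtain ⟨hpZ, hap, hpt⟩ : sSup (Z ∩ Icc a t) ∈ Z ∩ Icc a t :=
    (hZ.inter (isClosed_Icc (a := a) (b := t))).csSup_mem ⟨a, ha, le_rfl, hat⟩
      (bddAbove_Icc.mono inter_subset_right)
  obtain ⟨hqZ, htq, hqb⟩ : sInf (Z ∩ Icc t b) ∈ Z ∩ Icc t b :=
    (hZ.inter (isClosed_Icc (a := t) (b := b))).csInf_mem ⟨b, hb, htb, le_rfl⟩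
      (bddBelow_Icc.mono inter_subset_right)
  set p := sSup (Z ∩ Icc a t)
  set q := sInf (Z ∩ Icc t b)
  have hpt' : p < t := lt_of_le_of_ne hpt fun h => ht (h ▸ hpZ)
  have htq' : t < q := lt_of_le_of_ne htq fun h => ht (h ▸ hqZ)
  have hm := hmid p hpZ q hqZ
  rcases le_total ((p + q) / 2) t with hmt | htm
  · have : (p + q) / 2 ≤ p :=
      le_csSup (bddAbove_Icc.mono inter_subset_right) ⟨hm, by linarith, hmt⟩
    linarith
  · have : q ≤ (p + q) / 2 :=
      csInf_le (bddBelow_Icc.mono inter_subset_right) ⟨hm, htm, by linarith⟩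
    linarith

theorem add_eq_two_nsmul_of_abs_sub_le {Y : Type*} [AddCommGroup Y] {I : Set ℝ}
    (hI : I.OrdConnected) {g : ℝ → Y} {h : ℝ} (hh : 0 < h)
    (hg : ∀ t ∈ I, ∀ s ∈ I, |t - s| ≤ h → g t + g s = 2 • g ((t + s) / 2)) :
    ∀ t ∈ I, ∀ s ∈ I, g t + g s = 2 • g ((t + s) / 2) := by
  have hmid : ∀ t ∈ I, ∀ s ∈ I, (t + s) / 2 ∈ I := fun t ht s hs => by
    rcases le_total t s with hts | hst
    · exact hI.out ht hs ⟨by linarith, by linarith⟩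
    · exact hI.out hs ht ⟨by linarith, by linarith⟩
  suffices hdouble : ∀ n : ℕ, ∀ t ∈ I, ∀ s ∈ I, |t - s| ≤ 2 ^ n * h →
      g t + g s = 2 • g ((t + s) / 2) by
    intro t ht s hs
    obtain ⟨n, hn⟩ := pow_unbounded_of_one_lt (|t - s| / h) one_lt_two
    exact hdouble n t ht s hs ((div_le_iff₀ hh).1 hn.le)
  intro n
  induction n with
  | zero => simpa using hg
  | succ n ih =>
    intro t ht s hs hts
    have hhalf : |t - s| / 2 ≤ 2 ^ n * h := by rw [pow_succ] at hts; linarith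
    have ih' : ∀ a ∈ I, ∀ b ∈ I, a - b = (t - s) / 2 → g a + g b = 2 • g ((a + b) / 2) :=
      fun a ha b hb hab => ih a ha b hb (by rwa [hab, abs_div, abs_two])
    set m := (t + s) / 2 with hm_def
    have hm := hmid t ht s hs
    have hq₁ := hmid t ht m hm
    have hq₂ := hmid m hm s hs
    have e₁ := ih' t ht m hm (by rw [hm_def]; ring)
    have e₂ := ih' m hm s hs (by rw [hm_def]; ring)
    -- `m` is also the midpoint of the quarter points `(t + m) / 2` and `(m + s) / 2`
    have e₃ := ih' _ hq₁ _ hq₂ (by rw [hm_def]; ring)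
    rw [show ((t + m) / 2 + (m + s) / 2) / 2 = m by rw [hm_def]; ring] at e₃
    linear_combination (norm := module) e₁ + e₂ + 2 • e₃

theorem eq_lineMap_of_add_eq_two_nsmul {Y : Type*} [NormedAddCommGroup Y] [NormedSpace ℝ Y]
    {g : ℝ → Y} (hg : ContinuousOn g (Icc 0 1))
    (hjensen : ∀ t ∈ Icc (0 : ℝ) 1, ∀ s ∈ Icc (0 : ℝ) 1, g t + g s = 2 • g ((t + s) / 2)) :
    ∀ t ∈ Icc (0 : ℝ) 1, g t = lineMap (g 0) (g 1) t := by
  set Z := Icc (0 : ℝ) 1 ∩ (fun t => g t - lineMap (g 0) (g 1) t) ⁻¹' {0}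
  have hZ : IsClosed Z := (hg.sub lineMap_continuous.continuousOn).preimage_isClosed_of_isClosed
    isClosed_Icc isClosed_singleton
  have hmid : ∀ t ∈ Z, ∀ s ∈ Z, (t + s) / 2 ∈ Z := by
    rintro t ⟨ht, hgt⟩ s ⟨hs, hgs⟩
    simp only [mem_preimage, mem_singleton_iff, sub_eq_zero] at hgt hgs ⊢
    refine ⟨⟨by linarith [ht.1, hs.1], by linarith [ht.2, hs.2]⟩, ?_⟩
    have h2 : (2 : ℝ) • (g ((t + s) / 2) - lineMap (g 0) (g 1) ((t + s) / 2)) = 0 := by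
      have := hjensen t ht s hs
      rw [hgt, hgs] at this
      simp only [lineMap_apply_module] at this ⊢
      linear_combination (norm := module) -this
    simpa [sub_eq_zero] using h2
  intro t ht
  have h0 : (0 : ℝ) ∈ Z := ⟨left_mem_Icc.2 zero_le_one, by simp⟩
  have h1 : (1 : ℝ) ∈ Z := ⟨right_mem_Icc.2 zero_le_one, by simp⟩
  exact sub_eq_zero.1 (Icc_subset_of_isClosed_of_add_div_two_mem hZ hmid h0 h1 ht).2

theorem zero_mem_interior_of_neg_eq {E : Type*} [AddCommGroup E] [Module ℝ E] [TopologicalSpace E]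
    [IsTopologicalAddGroup E] [ContinuousSMul ℝ E] {S : Set E} (hS : Convex ℝ S) (hneg : -S = S)
    (hint : (interior S).Nonempty) : (0 : E) ∈ interior S := by
  obtain ⟨c, hc⟩ := hint
  have hc' : -c ∈ interior S :=
    interior_maximal (hneg ▸ neg_subset_neg.2 interior_subset) isOpen_interior.neg
      (by simpa using hc)
  convert hS.interior hc hc' (a := 1 / 2) (b := 1 / 2) (by norm_num) (by norm_num) (by norm_num)
    using 1
  module

section ExtremeDirections

variable {X : Type*} [NormedAddCommGroup X] [NormedSpace ℝ X]

theorem neg_extremePoints_closedBall :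
    -extremePoints ℝ (closedBall (0 : X) 1) = extremePoints ℝ (closedBall (0 : X) 1) := by
  simpa [image_neg_eq_neg, neg_closedBall] using
    image_extremePoints (𝕜 := ℝ) (LinearEquiv.neg ℝ (M := X)) (closedBall 0 1)

theorem eq_of_norm_sub_le_of_mem_extremePoints {e w x : X} {r : ℝ}
    (he : e ∈ extremePoints ℝ (closedBall (0 : X) 1))
    (h₁ : ‖w - (x + r • e)‖ ≤ |r|) (h₂ : ‖w - (x - r • e)‖ ≤ |r|) : w = x := by
  rcases eq_or_ne r 0 with rfl | hr
  · simpa [sub_eq_zero] using h₁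
  have hball : ∀ v : X, ‖v‖ ≤ |r| → r⁻¹ • v ∈ closedBall (0 : X) 1 := fun v hv => by
    rw [mem_closedBall_zero_iff, norm_smul, norm_inv, Real.norm_eq_abs]
    exact inv_mul_le_one_of_le₀ hv (abs_nonneg r)
  have hseg : e ∈ openSegment ℝ (r⁻¹ • (x + r • e - w)) (r⁻¹ • (w - (x - r • e))) :=
    ⟨1 / 2, 1 / 2, by norm_num, by norm_num, by norm_num, by match_scalars <;> field_simp <;> ring⟩
  have hleft := he.2 (hball _ (by rwa [← norm_neg, neg_sub])) (hball _ h₂) hseg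
  rw [inv_smul_eq_iff₀ hr] at hleft
  linear_combination (norm := module) -hleft

end ExtremeDirections

section MidpointDirections

variable {X Y : Type*} [NormedAddCommGroup X] [NormedAddCommGroup Y] {K : Set X} {Δ : X → Y}

-- `c ≥ ‖u‖` is the room required around the midpoint; unlike `‖u‖` it adds up along the
-- constructions below.
def IsMidpointDirection (K : Set X) (Δ : X → Y) (c : ℝ) (u : X) : Prop :=
  ‖u‖ ≤ c ∧ ∀ x, closedBall x c ⊆ K → Δ (x + u) + Δ (x - u) = 2 • Δ x

theorem add_mem_of_closedBall_subset {x v : X} {c : ℝ} (hx : closedBall x c ⊆ K) (hv : ‖v‖ ≤ c) :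
    x + v ∈ K :=
  hx (add_mem_closedBall_iff_norm.2 hv)

theorem sub_mem_of_closedBall_subset {x v : X} {c : ℝ} (hx : closedBall x c ⊆ K) (hv : ‖v‖ ≤ c) :
    x - v ∈ K :=
  hx (by rwa [mem_closedBall_iff_norm, sub_sub_cancel_left, norm_neg])

theorem isClosed_setOf_isMidpointDirection
    (hiso : ∀ x ∈ K, ∀ y ∈ K, ‖Δ x - Δ y‖ = ‖x - y‖) (c : ℝ) :
    IsClosed {u | IsMidpointDirection K Δ c u} := by
  have hΔ := continuousOn_of_norm_sub_eq hiso
  have hset : {u | IsMidpointDirection K Δ c u} = closedBall 0 c ∩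
      ⋂ x ∈ {x | closedBall x c ⊆ K},
        closedBall 0 c ∩ (fun u => Δ (x + u) + Δ (x - u)) ⁻¹' {2 • Δ x} := by
    ext u
    simp only [IsMidpointDirection, mem_ofPred_eq, mem_inter_iff, mem_closedBall_zero_iff,
      mem_iInter, mem_preimage, mem_singleton_iff]
    exact ⟨fun h => ⟨h.1, fun x hx => ⟨h.1, h.2 x hx⟩⟩, fun h => ⟨h.1, fun x hx => (h.2 x hx).2⟩⟩
  rw [hset]
  refine isClosed_closedBall.inter (isClosed_biInter fun x hx => ?_)
  refine ContinuousOn.preimage_isClosed_of_isClosed ?_ isClosed_closedBall isClosed_singleton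
  refine (hΔ.comp (by fun_prop) fun u hu => ?_).add (hΔ.comp (by fun_prop) fun u hu => ?_)
  · exact add_mem_of_closedBall_subset hx (mem_closedBall_zero_iff.1 hu)
  · exact sub_mem_of_closedBall_subset hx (mem_closedBall_zero_iff.1 hu)

variable [NormedSpace ℝ X] [NormedSpace ℝ Y]

theorem add_eq_two_nsmul_of_mem_extremePoints (hΔK : Convex ℝ (Δ '' K))
    (hiso : ∀ x ∈ K, ∀ y ∈ K, ‖Δ x - Δ y‖ = ‖x - y‖) {e p q x : X} {r : ℝ}
    (he : e ∈ extremePoints ℝ (closedBall (0 : X) 1)) (hp : p ∈ K) (hq : q ∈ K)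
    (hx₁ : x + r • e ∈ K) (hx₂ : x - r • e ∈ K)
    (hd₁ : ‖Δ p + Δ q - 2 • Δ (x + r • e)‖ ≤ 2 * |r|)
    (hd₂ : ‖Δ p + Δ q - 2 • Δ (x - r • e)‖ ≤ 2 * |r|) :
    Δ p + Δ q = 2 • Δ x := by
  obtain ⟨w, hw, hΔw⟩ : (2⁻¹ : ℝ) • (Δ p + Δ q) ∈ Δ '' K := by
    rw [smul_add]
    exact hΔK (mem_image_of_mem Δ hp) (mem_image_of_mem Δ hq) (by norm_num) (by norm_num)
      (by norm_num)
  have hdist : ∀ z ∈ K, ‖Δ p + Δ q - 2 • Δ z‖ ≤ 2 * |r| → ‖w - z‖ ≤ |r| := fun z hz hd => by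
    rw [← hiso w hw z hz, hΔw,
      show (2⁻¹ : ℝ) • (Δ p + Δ q) - Δ z = (2⁻¹ : ℝ) • (Δ p + Δ q - 2 • Δ z) by module,
      norm_smul]
    norm_num
    linarith
  obtain rfl := eq_of_norm_sub_le_of_mem_extremePoints he (hdist _ hx₁ hd₁) (hdist _ hx₂ hd₂)
  rw [hΔw]
  module

theorem isMidpointDirection_smul_of_mem_extremePoints (hΔK : Convex ℝ (Δ '' K))
    (hiso : ∀ x ∈ K, ∀ y ∈ K, ‖Δ x - Δ y‖ = ‖x - y‖) {e : X}
    (he : e ∈ extremePoints ℝ (closedBall (0 : X) 1)) (r : ℝ) :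
    IsMidpointDirection K Δ |r| (r • e) := by
  have hre : ‖r • e‖ ≤ |r| := by
    rw [norm_smul, Real.norm_eq_abs]
    exact mul_le_of_le_one_right (abs_nonneg r) (mem_closedBall_zero_iff.1 he.1)
  refine ⟨hre, fun x hx => ?_⟩
  have hx₁ := add_mem_of_closedBall_subset hx hre
  have hx₂ := sub_mem_of_closedBall_subset hx hre
  have hd : ‖Δ (x + r • e) - Δ (x - r • e)‖ ≤ 2 * |r| := by
    rw [hiso _ hx₁ _ hx₂, show x + r • e - (x - r • e) = (2 : ℝ) • (r • e) by module, norm_smul]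
    norm_num
    exact hre
  refine add_eq_two_nsmul_of_mem_extremePoints hΔK hiso he hx₁ hx₂ hx₁ hx₂ ?_ ?_
  · rwa [← norm_neg, show -(Δ (x + r • e) + Δ (x - r • e) - 2 • Δ (x + r • e)) =
      Δ (x + r • e) - Δ (x - r • e) by module]
  · rwa [show Δ (x + r • e) + Δ (x - r • e) - 2 • Δ (x - r • e) =
      Δ (x + r • e) - Δ (x - r • e) by module]

theorem IsMidpointDirection.add_smul_of_mem_extremePoints (hΔK : Convex ℝ (Δ '' K))
    (hiso : ∀ x ∈ K, ∀ y ∈ K, ‖Δ x - Δ y‖ = ‖x - y‖) {c : ℝ} {u e : X}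
    (hu : IsMidpointDirection K Δ c u) (he : e ∈ extremePoints ℝ (closedBall (0 : X) 1))
    (r : ℝ) : IsMidpointDirection K Δ (c + |r|) (u + r • e) := by
  have hb := isMidpointDirection_smul_of_mem_extremePoints hΔK hiso he r
  have hnorm : ‖u + r • e‖ ≤ c + |r| := (norm_add_le _ _).trans (add_le_add hu.1 hb.1)
  refine ⟨hnorm, fun x hx => ?_⟩
  set b := r • e
  have hu₁ : ‖u‖ ≤ c := hu.1
  have hb₁ : ‖b‖ ≤ |r| := hb.1
  have hc : 0 ≤ c := (norm_nonneg u).trans hu₁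
  have hball : ∀ (z : X) (ρ : ℝ), ‖z - x‖ + ρ ≤ c + |r| → closedBall z ρ ⊆ K := fun z ρ hz =>
    (closedBall_subset_closedBall' (by rwa [dist_eq_norm, add_comm])).trans hx
  have hx₁ := hball (x + u) |r| (by rw [add_sub_cancel_left]; linarith)
  have hx₂ := hball (x - u) |r| (by rw [sub_sub_cancel_left, norm_neg]; linarith)
  have hx₃ := hball (x + b) c (by rw [add_sub_cancel_left]; linarith)
  have hx₄ := hball (x - b) c (by rw [sub_sub_cancel_left, norm_neg]; linarith)
  have I₁ : Δ (x + (u + b)) + Δ (x + u - b) = 2 • Δ (x + u) := by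
    convert hb.2 (x + u) hx₁ using 3; abel
  have I₂ : Δ (x - u + b) + Δ (x - (u + b)) = 2 • Δ (x - u) := by
    convert hb.2 (x - u) hx₂ using 3; abel
  have I₃ : Δ (x + (u + b)) + Δ (x - u + b) = 2 • Δ (x + b) := by
    convert hu.2 (x + b) hx₃ using 3 <;> abel
  have I₄ : Δ (x + u - b) + Δ (x - (u + b)) = 2 • Δ (x - b) := by
    convert hu.2 (x - b) hx₄ using 3 <;> abel
  have hd₂ : ‖Δ (x - u) - Δ (x - u + b)‖ ≤ |r| := by
    rw [hiso _ (hx₂ (mem_closedBall_self (abs_nonneg r))) _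
      (add_mem_of_closedBall_subset hx₂ hb₁), sub_add_cancel_left, norm_neg]
    exact hb₁
  have hd₁ : ‖Δ (x + u) - Δ (x + u - b)‖ ≤ |r| := by
    rw [hiso _ (hx₁ (mem_closedBall_self (abs_nonneg r))) _
      (sub_mem_of_closedBall_subset hx₁ hb₁), sub_sub_cancel]
    exact hb₁
  -- by `I₁`–`I₄`, the preimage of the midpoint of `Δ (x ± (u + b))` is at distance `‖b‖` from
  -- both `x ± b`, so it is `x`
  refine add_eq_two_nsmul_of_mem_extremePoints hΔK hiso he (add_mem_of_closedBall_subset hx hnorm)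
    (sub_mem_of_closedBall_subset hx hnorm) (add_mem_of_closedBall_subset hx (by linarith))
    (sub_mem_of_closedBall_subset hx (by linarith)) ?_ ?_
  · calc ‖Δ (x + (u + b)) + Δ (x - (u + b)) - 2 • Δ (x + b)‖
        = ‖(2 : ℝ) • (Δ (x - u) - Δ (x - u + b))‖ := by
          congr 1; linear_combination (norm := module) I₃ + I₂
      _ ≤ 2 * |r| := by rw [norm_smul]; norm_num; exact hd₂
  · calc ‖Δ (x + (u + b)) + Δ (x - (u + b)) - 2 • Δ (x - b)‖
        = ‖(2 : ℝ) • (Δ (x + u) - Δ (x + u - b))‖ := by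
          congr 1; linear_combination (norm := module) I₁ + I₄
      _ ≤ 2 * |r| := by rw [norm_smul]; norm_num; exact hd₁

theorem isMidpointDirection_sum_smul (hΔK : Convex ℝ (Δ '' K))
    (hiso : ∀ x ∈ K, ∀ y ∈ K, ‖Δ x - Δ y‖ = ‖x - y‖) {ι : Type*} (s : Finset ι) (w : ι → ℝ)
    {z : ι → X} (hz : ∀ i ∈ s, z i ∈ extremePoints ℝ (closedBall (0 : X) 1)) :
    IsMidpointDirection K Δ (∑ i ∈ s, |w i|) (∑ i ∈ s, w i • z i) := by
  classical
  induction s using Finset.induction_on with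
  | empty => simp [IsMidpointDirection, two_nsmul]
  | insert j s hj ih =>
    rw [Finset.sum_insert hj, Finset.sum_insert hj, add_comm |w j|, add_comm (w j • z j)]
    exact (ih fun i hi => hz i (Finset.mem_insert_of_mem hi)).add_smul_of_mem_extremePoints
      hΔK hiso (hz j (Finset.mem_insert_self j s)) (w j)

theorem isMidpointDirection_smul_of_mem_closure_convexHull (hΔK : Convex ℝ (Δ '' K))
    (hiso : ∀ x ∈ K, ∀ y ∈ K, ‖Δ x - Δ y‖ = ‖x - y‖) {a : ℝ} (ha : 0 ≤ a) {v : X}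
    (hv : v ∈ closure (convexHull ℝ (extremePoints ℝ (closedBall (0 : X) 1)))) :
    IsMidpointDirection K Δ a (a • v) := by
  suffices hconv : convexHull ℝ (extremePoints ℝ (closedBall (0 : X) 1)) ⊆
      (a • ·) ⁻¹' {u | IsMidpointDirection K Δ a u} from
    closure_minimal hconv ((isClosed_setOf_isMidpointDirection hiso a).preimage
      (continuous_const_smul a)) hv
  intro v hv
  obtain ⟨ι, s, w, z, hw₀, hw₁, hz, rfl⟩ := (convexHull_eq _).subset hv
  have hsum := isMidpointDirection_sum_smul hΔK hiso s (fun i => a * w i) hz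
  rwa [Finset.sum_congr rfl fun i hi => abs_of_nonneg (mul_nonneg ha (hw₀ i hi)),
    ← Finset.mul_sum, hw₁, mul_one, ← Finset.sum_congr rfl fun i _ => smul_smul a (w i) (z i),
    ← Finset.smul_sum, ← Finset.centerMass_eq_of_sum_1 _ _ hw₁] at hsum

theorem exists_pos_forall_isMidpointDirection (hΔK : Convex ℝ (Δ '' K))
    (hiso : ∀ x ∈ K, ∀ y ∈ K, ‖Δ x - Δ y‖ = ‖x - y‖)
    (hX : (interior (closure (convexHull ℝ (extremePoints ℝ (closedBall (0 : X) 1))))).Nonempty) :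
    ∃ δ > 0, ∀ d : X, IsMidpointDirection K Δ (‖d‖ / δ) d := by
  have hneg : -closure (convexHull ℝ (extremePoints ℝ (closedBall (0 : X) 1))) =
      closure (convexHull ℝ (extremePoints ℝ (closedBall (0 : X) 1))) := by
    rw [neg_closure, ← convexHull_neg, neg_extremePoints_closedBall]
  obtain ⟨δ, hδ, hδS⟩ := nhds_basis_closedBall.mem_iff.1 (mem_interior_iff_mem_nhds.1
    (zero_mem_interior_of_neg_eq (convex_convexHull ℝ _).closure hneg hX))
  refine ⟨δ, hδ, fun d => ?_⟩
  rcases eq_or_ne d 0 with rfl | hd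
  · simpa using isMidpointDirection_smul_of_mem_closure_convexHull hΔK hiso le_rfl
      (hδS (mem_closedBall_self hδ.le))
  have hv : (δ / ‖d‖) • d ∈ closedBall (0 : X) δ := by
    rw [mem_closedBall_zero_iff, norm_smul, Real.norm_eq_abs, abs_of_pos (by positivity),
      div_mul_cancel₀ _ (norm_ne_zero_iff.2 hd)]
  have hscale : ‖d‖ / δ * (δ / ‖d‖) = 1 := by field_simp
  simpa [smul_smul, hscale] using isMidpointDirection_smul_of_mem_closure_convexHull hΔK hiso
    (by positivity : 0 ≤ ‖d‖ / δ) (hδS hv)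

theorem map_lineMap_of_mem_interior (hK : Convex ℝ K)
    (hiso : ∀ x ∈ K, ∀ y ∈ K, ‖Δ x - Δ y‖ = ‖x - y‖) {δ : ℝ} (hδ : 0 < δ)
    (hdir : ∀ d : X, IsMidpointDirection K Δ (‖d‖ / δ) d) {x y : X}
    (hx : x ∈ interior K) (hy : y ∈ interior K) :
    ∀ t ∈ Icc (0 : ℝ) 1, Δ (lineMap y x t) = lineMap (Δ y) (Δ x) t := by
  have hseg : MapsTo (lineMap y x) (Icc (0 : ℝ) 1) (interior K) := fun t ht =>
    hK.interior.lineMap_mem hy hx ht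
  obtain ⟨ρ, hρ, hρK⟩ := (isCompact_Icc.image (lineMap_continuous (p := y) (q := x)))
    |>.exists_cthickening_subset_open isOpen_interior hseg.image_subset
  have hball : ∀ t ∈ Icc (0 : ℝ) 1, closedBall (lineMap y x t) ρ ⊆ K := fun t ht =>
    (closedBall_subset_cthickening (mem_image_of_mem _ ht) ρ).trans (hρK.trans interior_subset)
  have hcont : ContinuousOn (Δ ∘ lineMap y x) (Icc (0 : ℝ) 1) :=
    (continuousOn_of_norm_sub_eq hiso).comp lineMap_continuous.continuousOn
      (hseg.mono_right interior_subset)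
  have hlocal : ∀ t ∈ Icc (0 : ℝ) 1, ∀ s ∈ Icc (0 : ℝ) 1, |t - s| ≤ ρ * δ / (‖x - y‖ + 1) →
      Δ (lineMap y x t) + Δ (lineMap y x s) = 2 • Δ (lineMap y x ((t + s) / 2)) := by
    intro t ht s hs hts
    have hd : ‖((t - s) / 2) • (x - y)‖ / δ ≤ ρ := by
      rw [div_le_iff₀ hδ, norm_smul, Real.norm_eq_abs, abs_div, abs_two]
      rw [le_div_iff₀ (by positivity)] at hts
      nlinarith [norm_nonneg (x - y), abs_nonneg (t - s)]
    have hm : (t + s) / 2 ∈ Icc (0 : ℝ) 1 := ⟨by linarith [ht.1, hs.1], by linarith [ht.2, hs.2]⟩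
    convert (hdir _).2 _ ((closedBall_subset_closedBall hd).trans (hball _ hm)) using 3 <;>
      simp only [lineMap_apply_module] <;> module
  simpa using eq_lineMap_of_add_eq_two_nsmul hcont
    (add_eq_two_nsmul_of_abs_sub_le ordConnected_Icc (by positivity) hlocal)

end MidpointDirections

theorem strong_mankiewicz_of_interior_nonempty_general
    {X : Type*} [NormedAddCommGroup X] [NormedSpace ℝ X]
    (hX : (interior (closure (convexHull ℝ
        (Set.extremePoints ℝ (Metric.closedBall (0 : X) 1))))).Nonempty)
    (K : Set X) (hKconv : Convex ℝ K) (hKint : (interior K).Nonempty)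
    {Y : Type*} [NormedAddCommGroup Y] [NormedSpace ℝ Y]
    (L : Set Y) (hL : Convex ℝ L)
    (Δ : X → Y) (hmap : Set.MapsTo Δ K L) (hsurj : Set.SurjOn Δ K L)
    (hiso : ∀ x ∈ K, ∀ y ∈ K, ‖Δ x - Δ y‖ = ‖x - y‖) :
    ∀ x ∈ K, ∀ y ∈ K, ∀ t : ℝ, 0 ≤ t → t ≤ 1 →
      Δ (t • x + (1 - t) • y) = t • Δ x + (1 - t) • Δ y := by
  intro x hx y hy t ht₀ ht₁
  have hΔK : Convex ℝ (Δ '' K) := hsurj.image_eq_of_mapsTo hmap ▸ hL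
  obtain ⟨δ, hδ, hdir⟩ := exists_pos_forall_isMidpointDirection hΔK hiso hX
  have hΔ := continuousOn_of_norm_sub_eq hiso
  have hinterior : EqOn (fun p : X × X => Δ (t • p.1 + (1 - t) • p.2))
      (fun p => t • Δ p.1 + (1 - t) • Δ p.2) (interior K ×ˢ interior K) := by
    rintro ⟨x, y⟩ ⟨hx, hy⟩
    simpa [lineMap_apply_module, add_comm] using
      map_lineMap_of_mem_interior hKconv hiso hδ hdir hx hy t ⟨ht₀, ht₁⟩
  refine hinterior.of_subset_closure ?_ ?_ (prod_mono interior_subset interior_subset) ?_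
    (mk_mem_prod hx hy)
  · exact hΔ.comp (by fun_prop) fun p hp => hKconv hp.1 hp.2 ht₀ (by linarith) (by ring)
  · exact ((hΔ.comp continuousOn_fst fun p hp => hp.1).const_smul t).add
      ((hΔ.comp continuousOn_snd fun p hp => hp.2).const_smul (1 - t))
  · rw [closure_prod_eq, hKconv.closure_interior_eq_closure_of_nonempty_interior hKint]
    exact prod_mono subset_closure subset_closure

/-- if the closed convex hull of the extreme points of the closed unit
ball of a real Banach space `X` has non-empty interior, then every convex body
`K ⊆ X` satisfies the strong Mankiewicz property. -/
theorem strong_mankiewicz_of_interior_nonempty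
    {X : Type*} [NormedAddCommGroup X] [NormedSpace ℝ X] [CompleteSpace X]
    (hX : (interior (closure (convexHull ℝ
        (Set.extremePoints ℝ (Metric.closedBall (0 : X) 1))))).Nonempty)
    (K : Set X) (hKconv : Convex ℝ K) (hKint : (interior K).Nonempty)
    {Y : Type*} [NormedAddCommGroup Y] [NormedSpace ℝ Y]
    (L : Set Y) (hL : Convex ℝ L)
    (Δ : X → Y) (hmap : Set.MapsTo Δ K L) (hsurj : Set.SurjOn Δ K L)
    (hiso : ∀ x ∈ K, ∀ y ∈ K, ‖Δ x - Δ y‖ = ‖x - y‖) :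
    ∀ x ∈ K, ∀ y ∈ K, ∀ t : ℝ, 0 ≤ t → t ≤ 1 →
      Δ (t • x + (1 - t) • y) = t • Δ x + (1 - t) • Δ y :=
  strong_mankiewicz_of_interior_nonempty_general hX K hKconv hKint L hL Δ hmap hsurj hiso
end

section
/- Let H be a complex Hilbert space and let B(H) denote the algebra of bounded linear operators on H with the operator norm. Then the closed unit ball of B(H) satisfies the strong Mankiewicz property: for every normed space Y, every convex subset L ⊆ Y, and every surjective isometry Δ : B_{B(H)} → L, the map Δ is affine, i.e. Δ(t x + (1 − t) y) = t Δ(x) + (1 − t) Δ(y) for all x, y in the closed unit ball of B(H) and all t ∈ [0, 1]. (This is the instance for the JBW*-triple B(H) of the result that the closed unit ball of every JBW*-triple satisfies the strong Mankiewicz property.) -/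
/-!
In a Hilbert space `H`, strict convexity makes metric segments unique, and this transfers to
`B(H)` along every direction `b` that is a multiple of a unitary: the only operator at distances
`t‖b‖` and `(1 - t)‖b‖` from `p` and `p + b` is `p + t • b`. If `Δ` is an isometry of the ball onto
a convex set, the preimage of `(1 - t) • Δ x + t • Δ (x + b)` is such an operator, which makes `Δ`
affine along these directions. Every operator is a sum of four multiples of unitaries of total norm
at most `2‖a‖`, so a parallelogram induction over the summands makes `Δ` affine on short segments
well inside the ball. Overlapping short segments glue to whole segments of the open ball, and
shrinking towards `0` (which moves `Δ` by at most the shrinking factor) reaches the closed ball.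
-/

open AffineMap Metric Set
open scoped NNReal

section Segments
variable {E F : Type*} [AddCommGroup E] [Module ℝ E] [AddCommGroup F] [Module ℝ F]

def AffineOnSegment (g : E → F) (x y : E) : Prop :=
  ∀ t ∈ Icc (0 : ℝ) 1, g (lineMap x y t) = lineMap (g x) (g y) t

theorem lineMap_sub_lineMap_left (a b c : E) (t : ℝ) :
    lineMap a b t - lineMap a c t = t • (b - c) := by
  simp only [lineMap_apply_module]; module

theorem lineMap_sub_lineMap_right (a b c : E) (t : ℝ) :
    lineMap a c t - lineMap b c t = (1 - t) • (a - b) := by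
  simp only [lineMap_apply_module]; module

theorem affineOnSegment_self (g : E → F) (x : E) : AffineOnSegment g x x := by
  intro t _; simp

theorem affineOnSegment_comp_iff {E' : Type*} [AddCommGroup E'] [Module ℝ E'] {g : E → F}
    (f : E' →ᵃ[ℝ] E) (x y : E') :
    AffineOnSegment (g ∘ f) x y ↔ AffineOnSegment g (f x) (f y) := by
  simp only [AffineOnSegment, Function.comp_apply, AffineMap.apply_lineMap]

theorem AffineMap.eq_of_apply_eq_of_apply_eq {f f' : ℝ →ᵃ[ℝ] F} {a b : ℝ} (hab : a ≠ b)
    (ha : f a = f' a) (hb : f b = f' b) : f = f' := by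
  ext v
  have hv : v = lineMap a b ((v - a) / (b - a)) := by
    rw [lineMap_apply_ring']; field_simp [sub_ne_zero.2 hab.symm]; ring
  rw [hv, f.apply_lineMap, f'.apply_lineMap, ha, hb]

theorem affineOnSegment_iff_exists_affineMap {g : ℝ → F} {a b : ℝ} (hab : a < b) :
    AffineOnSegment g a b ↔ ∃ f : ℝ →ᵃ[ℝ] F, EqOn g f (Icc a b) := by
  constructor
  · intro h
    refine ⟨(lineMap (g a) (g b)).comp ((b - a)⁻¹ • (AffineMap.id ℝ ℝ - AffineMap.const ℝ ℝ a)),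
      fun v hv => ?_⟩
    have hba : b - a ≠ 0 := (sub_pos.2 hab).ne'
    have hτ : (v - a) / (b - a) ∈ Icc (0 : ℝ) 1 := by
      constructor
      · exact div_nonneg (sub_nonneg.2 hv.1) (sub_pos.2 hab).le
      · rw [div_le_one (sub_pos.2 hab)]; linarith [hv.2]
    have hv' : lineMap a b ((v - a) / (b - a)) = v := by
      rw [lineMap_apply_ring']; field_simp; ring
    rw [← hv', h _ hτ]
    simp [div_eq_inv_mul, inv_mul_cancel₀ hba]
  · rintro ⟨f, hf⟩ t ht
    have ha : a ∈ Icc a b := ⟨le_rfl, hab.le⟩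
    have hb : b ∈ Icc a b := ⟨hab.le, le_rfl⟩
    rw [hf ((convex_Icc a b).lineMap_mem ha hb ht), f.apply_lineMap, hf ha, hf hb]

theorem exists_affineMap_eqOn_Icc_of_forall_short {g : ℝ → F} {δ : ℝ} (hδ : 0 < δ)
    (h : ∀ s u, 0 ≤ s → s < u → u ≤ 1 → u - s ≤ δ → ∃ f : ℝ →ᵃ[ℝ] F, EqOn g f (Icc s u)) :
    ∃ f : ℝ →ᵃ[ℝ] F, EqOn g f (Icc 0 1) := by
  -- windows of width `δ` advancing by `δ / 2` overlap in intervals of positive length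
  have step : ∀ n : ℕ, ∃ f : ℝ →ᵃ[ℝ] F, EqOn g f (Icc 0 (min ((n + 1) * (δ / 2)) 1)) := by
    intro n
    induction n with
    | zero =>
      refine h 0 _ le_rfl (lt_min (by positivity) one_pos) (min_le_right _ _) ?_
      linarith [min_le_left ((0 + 1) * (δ / 2)) 1]
    | succ n ih =>
      obtain ⟨f, hf⟩ := ih
      push_cast
      set a := min ((n + 1) * (δ / 2)) 1
      set b := min ((n + 1 + 1) * (δ / 2)) 1
      have hab : a ≤ b := min_le_min_right _ (by nlinarith)
      by_cases ha : a = 1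
      · have hb : b = a := by rw [ha]; exact le_antisymm (min_le_right _ _) (ha ▸ hab)
        exact ⟨f, hb ▸ hf⟩
      have ha' : a = (n + 1) * (δ / 2) := min_eq_left (by
        by_contra hlt; exact ha (min_eq_right (le_of_not_ge hlt)))
      have hs : (0 : ℝ) ≤ n * (δ / 2) := by positivity
      have hsa : n * (δ / 2) < a := by rw [ha']; linarith
      obtain ⟨f', hf'⟩ := h (n * (δ / 2)) b hs (hsa.trans_le hab) (min_le_right _ _)
        (by linarith [min_le_left ((n + 1 + 1) * (δ / 2)) 1])
      have hff' : f = f' := AffineMap.eq_of_apply_eq_of_apply_eq hsa.ne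
        ((hf ⟨hs, hsa.le⟩).symm.trans (hf' ⟨le_rfl, (hsa.trans_le hab).le⟩))
        ((hf ⟨hs.trans hsa.le, le_rfl⟩).symm.trans (hf' ⟨hsa.le, hab⟩))
      refine ⟨f, fun v hv => ?_⟩
      rcases le_total v a with hva | hva
      · exact hf ⟨hv.1, hva⟩
      · rw [hff']; exact hf' ⟨hsa.le.trans hva, hv.2⟩
  obtain ⟨n, hn⟩ := exists_nat_gt (2 / δ)
  obtain ⟨f, hf⟩ := step n
  rw [min_eq_right] at hf
  · exact ⟨f, hf⟩
  · rw [div_lt_iff₀ hδ] at hn; nlinarith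

end Segments

section Rigid
variable {E : Type*} [NormedAddCommGroup E] [NormedSpace ℝ E]

def IsRigidDirection (b : E) : Prop :=
  ∀ p z : E, ∀ t : ℝ, ‖z - p‖ ≤ t * ‖b‖ → ‖z - (p + b)‖ ≤ (1 - t) * ‖b‖ → z = p + t • b

variable (E) in
def HasRigidDecompositions (K : ℝ≥0) : Prop :=
  ∀ a : E, ∃ l : List E, l.sum = a ∧ (∀ b ∈ l, IsRigidDirection b) ∧ (l.map (‖·‖)).sum ≤ K * ‖a‖

theorem isRigidDirection_of_strictConvexSpace [StrictConvexSpace ℝ E] (b : E) :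
    IsRigidDirection b := by
  intro p z t h₁ h₂
  have htri : ‖b‖ ≤ ‖z - p‖ + ‖z - (p + b)‖ := by
    simpa using norm_sub_le (z - p) (z - (p + b))
  have hpb : dist p (p + b) = ‖b‖ := dist_self_add_right b p
  have := eq_lineMap_of_dist_eq_mul_of_dist_eq_mul (x := p) (y := z) (z := p + b) (r := t)
    (by rw [hpb, dist_comm, dist_eq_norm]; linarith) (by rw [hpb, dist_eq_norm]; linarith)
  simpa [lineMap_apply, add_comm] using this

end Rigid

section Mankiewicz

variable {E Y : Type*} [NormedAddCommGroup E] [NormedSpace ℝ E] [NormedAddCommGroup Y]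
  [NormedSpace ℝ Y] {Δ : E → Y} (hconv : Convex ℝ (Δ '' closedBall 0 1))
  (hiso : ∀ x ∈ closedBall (0 : E) 1, ∀ y ∈ closedBall (0 : E) 1, ‖Δ x - Δ y‖ = ‖x - y‖)
include hconv hiso

theorem affineOnSegment_of_parallelogram {x b S : E} (hb : IsRigidDirection b)
    (hx : x ∈ closedBall 0 1) (hxb : x + b ∈ closedBall 0 1) (hxS : x + S ∈ closedBall 0 1)
    (hxbS : x + b + S ∈ closedBall 0 1) (h₁ : AffineOnSegment Δ x (x + S))
    (h₂ : AffineOnSegment Δ (x + b) (x + b + S)) : AffineOnSegment Δ x (x + b + S) := by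
  intro t ht
  obtain ⟨z, hz, hzt⟩ := hconv.lineMap_mem (mem_image_of_mem Δ hx) (mem_image_of_mem Δ hxbS) ht
  have hp : lineMap x (x + S) t ∈ closedBall (0 : E) 1 :=
    (convex_closedBall 0 1).lineMap_mem hx hxS ht
  have hpb : lineMap (x + b) (x + b + S) t ∈ closedBall (0 : E) 1 :=
    (convex_closedBall 0 1).lineMap_mem hxb hxbS ht
  have hpb' : lineMap x (x + S) t + b = lineMap (x + b) (x + b + S) t := by
    simp only [lineMap_apply_module]; module
  have hdist₁ : ‖z - lineMap x (x + S) t‖ = t * ‖b‖ := by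
    rw [← hiso _ hz _ hp, hzt, h₁ t ht, lineMap_sub_lineMap_left, norm_smul,
      Real.norm_of_nonneg ht.1, hiso _ hxbS _ hxS, add_right_comm, add_sub_cancel_left]
  have hdist₂ : ‖z - (lineMap x (x + S) t + b)‖ = (1 - t) * ‖b‖ := by
    rw [hpb', ← hiso _ hz _ hpb, hzt, h₂ t ht, lineMap_sub_lineMap_right, norm_smul,
      Real.norm_of_nonneg (sub_nonneg.2 ht.2), hiso _ hx _ hxb, sub_add_cancel_left, norm_neg]
  have key : z = lineMap x (x + S) t + t • b := hb _ _ _ hdist₁.le hdist₂.le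
  rw [← hzt, key]
  congr 1
  simp only [lineMap_apply_module]; module

theorem affineOnSegment_add_list_sum (l : List E) (hl : ∀ b ∈ l, IsRigidDirection b) {x : E}
    (hx : ‖x‖ + (l.map (‖·‖)).sum ≤ 1) : AffineOnSegment Δ x (x + l.sum) := by
  induction l generalizing x with
  | nil => simpa using affineOnSegment_self Δ x
  | cons b l ih =>
    simp only [List.map_cons, List.sum_cons] at hx ⊢
    have hl' : ∀ e ∈ l, IsRigidDirection e := fun e he => hl e (List.mem_cons_of_mem b he)
    have hS : ‖l.sum‖ ≤ (l.map (‖·‖)).sum :=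
      List.le_sum_of_subadditive (‖·‖) norm_zero.le norm_add_le l
    have hS₀ : 0 ≤ (l.map (‖·‖)).sum := List.sum_nonneg (by simp)
    have hxb := norm_add_le x b
    have hxS := norm_add_le x l.sum
    have hxbS := norm_add_le (x + b) l.sum
    have hb := norm_nonneg b
    rw [← add_assoc]
    refine affineOnSegment_of_parallelogram hconv hiso (hl b List.mem_cons_self) ?_ ?_ ?_ ?_
      (ih hl' ?_) (ih hl' ?_) <;> try rw [mem_closedBall_zero_iff]
    all_goals linarith

theorem affineOnSegment_of_norm_add_mul_norm_sub_le {K : ℝ≥0} (hK : HasRigidDecompositions E K)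
    {x y : E} (h : ‖x‖ + K * ‖y - x‖ ≤ 1) : AffineOnSegment Δ x y := by
  obtain ⟨l, hsum, hl, hnorm⟩ := hK (y - x)
  have := affineOnSegment_add_list_sum hconv hiso l hl (x := x) (by linarith)
  rwa [hsum, add_sub_cancel] at this

theorem affineOnSegment_of_norm_le_of_lt_one {K : ℝ≥0} (hK : HasRigidDecompositions E K)
    {x y : E} {r : ℝ} (hr : r < 1) (hx : ‖x‖ ≤ r) (hy : ‖y‖ ≤ r) : AffineOnSegment Δ x y := by
  have hr' : 0 < 1 - r := sub_pos.2 hr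
  set δ := (1 - r) / (K * ‖y - x‖ + 1)
  have hδ : 0 < δ := by positivity
  have hwindow : ∀ s u, 0 ≤ s → s < u → u ≤ 1 → u - s ≤ δ →
      AffineOnSegment Δ (lineMap x y s) (lineMap x y u) := by
    intro s u hs hsu hu hsuδ
    apply affineOnSegment_of_norm_add_mul_norm_sub_le hconv hiso hK
    have hp : ‖lineMap x y s‖ ≤ r := mem_closedBall_zero_iff.1 <|
      (convex_closedBall 0 r).lineMap_mem (mem_closedBall_zero_iff.2 hx)
        (mem_closedBall_zero_iff.2 hy) ⟨hs, hsu.le.trans hu⟩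
    have hd : ‖lineMap x y u - lineMap x y s‖ = (u - s) * ‖y - x‖ := by
      rw [← dist_eq_norm, dist_lineMap_lineMap, Real.dist_eq, abs_of_pos (sub_pos.2 hsu),
        dist_eq_norm_sub']
    calc ‖lineMap x y s‖ + K * ‖lineMap x y u - lineMap x y s‖
        ≤ r + δ * (K * ‖y - x‖) := by rw [hd, mul_left_comm]; gcongr
      _ ≤ r + δ * (K * ‖y - x‖ + 1) := by gcongr; linarith
      _ = 1 := by simp only [δ]; field_simp; ring
  obtain ⟨f, hf⟩ := exists_affineMap_eqOn_Icc_of_forall_short hδ fun s u hs hsu hu hsuδ =>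
    (affineOnSegment_iff_exists_affineMap hsu).1
      ((affineOnSegment_comp_iff (lineMap x y) s u).2 (hwindow s u hs hsu hu hsuδ))
  simpa using (affineOnSegment_comp_iff (g := Δ) (lineMap x y) 0 1).1
    ((affineOnSegment_iff_exists_affineMap zero_lt_one).2 ⟨f, hf⟩)

theorem affineOnSegment_of_mem_closedBall {K : ℝ≥0} (hK : HasRigidDecompositions E K)
    {x y : E} (hx : x ∈ closedBall 0 1) (hy : y ∈ closedBall 0 1) : AffineOnSegment Δ x y := by
  intro t ht
  have hsmul : ∀ r ∈ Icc (0 : ℝ) 1, ∀ v ∈ closedBall (0 : E) 1, ‖r • v‖ ≤ r := fun r hr v hv => by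
    rw [norm_smul, Real.norm_of_nonneg hr.1]
    exact mul_le_of_le_one_right hr.1 (mem_closedBall_zero_iff.1 hv)
  have hshrink : ∀ r ∈ Icc (0 : ℝ) 1, ∀ v ∈ closedBall (0 : E) 1, ‖Δ v - Δ (r • v)‖ ≤ 1 - r := by
    intro r hr v hv
    rw [hiso v hv _ (mem_closedBall_zero_iff.2 ((hsmul r hr v hv).trans hr.2)),
      show v - r • v = (1 - r) • v by rw [sub_smul, one_smul], norm_smul,
      Real.norm_of_nonneg (sub_nonneg.2 hr.2)]
    exact mul_le_of_le_one_right (sub_nonneg.2 hr.2) (mem_closedBall_zero_iff.1 hv)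
  have hp : lineMap x y t ∈ closedBall (0 : E) 1 := (convex_closedBall 0 1).lineMap_mem hx hy ht
  refine eq_of_forall_dist_le fun ε hε => ?_
  set r := 1 - min ε 1 / 2 with hr_def
  have hr : r ∈ Icc (0 : ℝ) 1 :=
    ⟨by linarith [min_le_right ε 1], by linarith [le_min hε.le zero_le_one]⟩
  have hr₁ : r < 1 := by linarith [lt_min hε one_pos]
  have haff := affineOnSegment_of_norm_le_of_lt_one hconv hiso hK hr₁ (hsmul r hr x hx)
    (hsmul r hr y hy) t ht
  have hscale : lineMap (r • x) (r • y) t = r • lineMap x y t := by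
    simp only [lineMap_apply_module]; module
  rw [hscale] at haff
  have hend : ‖lineMap (Δ (r • x)) (Δ (r • y)) t - lineMap (Δ x) (Δ y) t‖ ≤ 1 - r := by
    rw [← vsub_eq_sub, lineMap_vsub_lineMap, vsub_eq_sub, vsub_eq_sub, ← mem_closedBall_zero_iff]
    refine (convex_closedBall 0 (1 - r)).lineMap_mem ?_ ?_ ht <;>
      rw [mem_closedBall_zero_iff, norm_sub_rev] <;> exact hshrink r hr _ ‹_›
  calc dist (Δ (lineMap x y t)) (lineMap (Δ x) (Δ y) t)
      ≤ ‖Δ (lineMap x y t) - Δ (r • lineMap x y t)‖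
        + ‖lineMap (Δ (r • x)) (Δ (r • y)) t - lineMap (Δ x) (Δ y) t‖ := by
        rw [← haff, dist_eq_norm]; exact norm_sub_le_norm_sub_add_norm_sub _ _ _
    _ ≤ (1 - r) + (1 - r) := add_le_add (hshrink r hr _ hp) hend
    _ ≤ ε := by linarith [min_le_left ε 1]

end Mankiewicz

theorem ContinuousLinearMap.norm_apply_eq_opNorm_mul {𝕜 F G : Type*} [NontriviallyNormedField 𝕜]
    [NormedAddCommGroup F] [NormedSpace 𝕜 F] [NormedAddCommGroup G] [NormedSpace 𝕜 G]
    {e : F →L[𝕜] G} {c : ℝ}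
    (he : ∀ ξ, ‖e ξ‖ = c * ‖ξ‖) (ξ : F) : ‖e ξ‖ = ‖e‖ * ‖ξ‖ := by
  refine le_antisymm (e.le_opNorm ξ) ?_
  rcases eq_or_ne ξ 0 with rfl | hξ
  · simp
  have hc : 0 ≤ c := (mul_nonneg_iff_of_pos_right (norm_pos_iff.2 hξ)).1 (he ξ ▸ norm_nonneg _)
  rw [he]
  gcongr
  exact e.opNorm_le_bound hc fun η => (he η).le

theorem ContinuousLinearMap.isRigidDirection_of_norm_apply_eq
    {F G : Type*} [NormedAddCommGroup F] [NormedSpace ℂ F] [NormedAddCommGroup G]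
    [InnerProductSpace ℂ G] {b : F →L[ℂ] G} (hb : ∀ ξ, ‖b ξ‖ = ‖b‖ * ‖ξ‖) :
    IsRigidDirection b := by
  have := InnerProductSpace.toInnerProductSpaceable ℂ (E := G)
  intro p z t h₁ h₂
  ext ξ
  refine (isRigidDirection_of_strictConvexSpace (b ξ) (p ξ) (z ξ) t ?_ ?_).trans (by simp)
  · calc ‖z ξ - p ξ‖ ≤ ‖z - p‖ * ‖ξ‖ := (z - p).le_opNorm ξ
      _ ≤ t * ‖b‖ * ‖ξ‖ := by gcongr
      _ = t * ‖b ξ‖ := by rw [hb, mul_assoc]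
  · calc ‖z ξ - (p ξ + b ξ)‖ ≤ ‖z - (p + b)‖ * ‖ξ‖ := (z - (p + b)).le_opNorm ξ
      _ ≤ (1 - t) * ‖b‖ * ‖ξ‖ := by gcongr
      _ = (1 - t) * ‖b ξ‖ := by rw [hb, mul_assoc]

theorem ContinuousLinearMap.hasRigidDecompositions {H : Type*} [NormedAddCommGroup H]
    [InnerProductSpace ℂ H] [CompleteSpace H] : HasRigidDecompositions (H →L[ℂ] H) 2 := by
  intro a
  obtain ⟨u, c, hsum, hc⟩ := CStarAlgebra.exists_sum_four_unitary a
  have hpiece : ∀ i ξ, ‖(c i • (u i : H →L[ℂ] H)) ξ‖ = ‖c i‖ * ‖ξ‖ := fun i ξ => by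
    rw [smul_apply, norm_smul, Unitary.norm_map]
  refine ⟨List.ofFn fun i => c i • (u i : H →L[ℂ] H), by rw [List.sum_ofFn, hsum], ?_, ?_⟩
  · simp only [List.mem_ofFn]
    rintro _ ⟨i, rfl⟩
    exact isRigidDirection_of_norm_apply_eq (norm_apply_eq_opNorm_mul (hpiece i))
  · rw [List.map_ofFn, List.sum_ofFn]
    calc ∑ i, ‖c i • (u i : H →L[ℂ] H)‖ ≤ ∑ _i : Fin 4, ‖a‖ / 2 := Finset.sum_le_sum fun i _ =>
          (opNorm_le_bound _ (norm_nonneg _) fun ξ => (hpiece i ξ).le).trans (hc i)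
      _ = 2 * ‖a‖ := by rw [Finset.sum_const, Finset.card_univ, Fintype.card_fin, nsmul_eq_mul]; ring

/-- the closed unit ball of `B(H)` for a complex Hilbert space `H`
satisfies the strong Mankiewicz property. -/
theorem strong_mankiewicz_unitBall_operators
    {H : Type*} [NormedAddCommGroup H] [InnerProductSpace ℂ H] [CompleteSpace H]
    {Y : Type*} [NormedAddCommGroup Y] [NormedSpace ℝ Y]
    (L : Set Y) (hL : Convex ℝ L)
    (Δ : (H →L[ℂ] H) → Y)
    (hmap : Set.MapsTo Δ (Metric.closedBall (0 : H →L[ℂ] H) 1) L)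
    (hsurj : Set.SurjOn Δ (Metric.closedBall (0 : H →L[ℂ] H) 1) L)
    (hiso : ∀ x ∈ Metric.closedBall (0 : H →L[ℂ] H) 1,
      ∀ y ∈ Metric.closedBall (0 : H →L[ℂ] H) 1, ‖Δ x - Δ y‖ = ‖x - y‖) :
    ∀ x ∈ Metric.closedBall (0 : H →L[ℂ] H) 1,
      ∀ y ∈ Metric.closedBall (0 : H →L[ℂ] H) 1, ∀ t : ℝ, 0 ≤ t → t ≤ 1 →
        Δ (t • x + (1 - t) • y) = t • Δ x + (1 - t) • Δ y := by
  intro x hx y hy t ht₀ ht₁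
  have hconv : Convex ℝ (Δ '' closedBall 0 1) := hsurj.image_eq_of_mapsTo hmap ▸ hL
  have h := affineOnSegment_of_mem_closedBall hconv hiso ContinuousLinearMap.hasRigidDecompositions
    hy hx t ⟨ht₀, ht₁⟩
  simpa only [lineMap_apply_module, add_comm] using h
end

section
/- Let H be a non-zero complex Hilbert space, let Y be a real Banach space, and let Δ : S(H) → S(Y) be a surjective isometry between the unit spheres. Then Δ(−b) = −Δ(b) for every b ∈ S(H). -/
/-- a surjective isometry between the unit sphere of a non-zero
complex Hilbert space and the unit sphere of a real Banach space is odd. -/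
theorem sphere_isometry_neg
    {H : Type*} [NormedAddCommGroup H] [InnerProductSpace ℂ H] [CompleteSpace H]
    [Nontrivial H]
    {Y : Type*} [NormedAddCommGroup Y] [NormedSpace ℝ Y] [CompleteSpace Y]
    (Δ : H → Y)
    (hmap : ∀ x : H, ‖x‖ = 1 → ‖Δ x‖ = 1)
    (hsurj : ∀ y : Y, ‖y‖ = 1 → ∃ x : H, ‖x‖ = 1 ∧ Δ x = y)
    (hiso : ∀ x y : H, ‖x‖ = 1 → ‖y‖ = 1 → ‖Δ x - Δ y‖ = ‖x - y‖) :
    ∀ b : H, ‖b‖ = 1 → Δ (-b) = -Δ b := by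
  intro b hb
  obtain ⟨c, hc, hΔc⟩ := hsurj (-Δ b) (by rw [norm_neg, hmap b hb])
  have hdist : ‖b - c‖ = 2 := by
    have := hiso b c hb hc
    rw [hΔc, sub_neg_eq_add, ← two_smul ℝ (Δ b), norm_smul] at this
    simp [hmap b hb] at this
    linarith
  have hpar := parallelogram_law_with_norm ℂ b c
  rw [hdist, hb, hc] at hpar
  have : ‖b + c‖ = 0 := by nlinarith [norm_nonneg (b + c)]
  have hcb : c = -b := by
    have h0 := norm_eq_zero.mp this
    rw [add_comm] at h0
    exact eq_neg_of_add_eq_zero_left h0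
  rw [← hcb, hΔc]
end
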